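/- arXiv:1803.08092 — 3 statements merged into one kernel-verified Lean document; each statement's English description precedes it below -/
import Mathlib

section
/- Under the hyperplane reset setup, the map R̄(x) = R(p(x)) + r̂ g_e(x) is a C^∞ diffeomorphism of ℝⁿ onto ℝⁿ, and its inverse is given in closed form by R̄⁻¹(y) = R⁻¹(y − r̂ r_e(y)) + ĝ r_e(y). -/
open Set Function
open scoped RealInnerProductSpace

/-!
`R̄ = resetExtension R ĝ r̂ c` applies `R` to the foot point `p(x) ∈ G̃` and then moves off `R̃`
along `r̂` by the level `g_e(x)`. Since `R(p(x)) ∈ R̃` and `r̂` is a unit vector,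
`r_e(R̄ x) = g_e(x)`, so the proposed inverse, which has the same shape with the roles of
`(R, ĝ, c)` and `(R⁻¹, r̂, d)` exchanged, recovers `R(p(x))`, hence `p(x)`, and then `x`.
The exchange of roles gives the other one-sided inverse, because `R⁻¹` maps `R̃` into `G̃`.
-/

section ResetExtension

variable {E : Type*} [NormedAddCommGroup E] [InnerProductSpace ℝ E]

def resetExtension (R : E → E) (g r : E) (c : ℝ) (x : E) : E :=
  R (x - (⟪g, x⟫ - c) • g) + (⟪g, x⟫ - c) • r

theorem contDiff_resetExtension {k : WithTop ℕ∞} {R : E → E} (hR : ContDiff ℝ k R)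
    (g r : E) (c : ℝ) : ContDiff ℝ k (resetExtension R g r c) := by
  have hlevel : ContDiff ℝ k fun x : E => ⟪g, x⟫ - c :=
    (innerSL ℝ g).contDiff.sub contDiff_const
  exact (hR.comp (contDiff_id.sub (hlevel.smul contDiff_const))).add
    (hlevel.smul contDiff_const)

theorem inner_sub_level_smul_of_norm_eq_one {g : E} (hg : ‖g‖ = 1) (x : E) (c : ℝ) :
    ⟪g, x - (⟪g, x⟫ - c) • g⟫ = c := by
  rw [inner_sub_right, real_inner_smul_right, inner_self_eq_one_of_norm_eq_one hg]
  ring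

theorem leftInverse_resetExtension {R Rinv : E → E} {g r : E} {c d : ℝ}
    (hg : ‖g‖ = 1) (hr : ‖r‖ = 1) (hinv : LeftInverse Rinv R)
    (hmaps : MapsTo R {x | ⟪g, x⟫ = c} {y | ⟪r, y⟫ = d}) :
    LeftInverse (resetExtension Rinv r g d) (resetExtension R g r c) := by
  intro x
  have hfoot : ⟪r, R (x - (⟪g, x⟫ - c) • g)⟫ = d :=
    hmaps (inner_sub_level_smul_of_norm_eq_one hg x c)
  have hlevel : ⟪r, resetExtension R g r c x⟫ - d = ⟪g, x⟫ - c := by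
    rw [resetExtension, inner_add_right, real_inner_smul_right, hfoot,
      inner_self_eq_one_of_norm_eq_one hr]
    ring
  rw [resetExtension, hlevel, resetExtension, add_sub_cancel_right, hinv, sub_add_cancel]

end ResetExtension

/-- Hyperplane reset setup: the map `R̄(x) = R(p(x)) + g_e(x) r̂` is a `C^∞`
diffeomorphism of `ℝⁿ`, with inverse `R̄⁻¹(y) = R⁻¹(y − r_e(y) r̂) + r_e(y) ĝ`. -/
theorem reset_extension_diffeo {n : ℕ}
    (ghat rhat : EuclideanSpace ℝ (Fin n)) (hg : ‖ghat‖ = 1) (hr : ‖rhat‖ = 1) (c d : ℝ)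
    (R Rinv : EuclideanSpace ℝ (Fin n) → EuclideanSpace ℝ (Fin n))
    (hR : ContDiff ℝ (⊤:ℕ∞) R) (hRinv : ContDiff ℝ (⊤:ℕ∞) Rinv)
    (hleft : Function.LeftInverse Rinv R) (hright : Function.RightInverse Rinv R)
    (hguard : R '' {x | ⟪ghat, x⟫ - c = 0} = {y | ⟪rhat, y⟫ - d = 0}) :
    ContDiff ℝ (⊤:ℕ∞) (fun x : EuclideanSpace ℝ (Fin n) =>
        R (x - (⟪ghat, x⟫ - c) • ghat) + (⟪ghat, x⟫ - c) • rhat) ∧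
    ContDiff ℝ (⊤:ℕ∞) (fun y : EuclideanSpace ℝ (Fin n) =>
        Rinv (y - (⟪rhat, y⟫ - d) • rhat) + (⟪rhat, y⟫ - d) • ghat) ∧
    Function.LeftInverse
      (fun y : EuclideanSpace ℝ (Fin n) =>
        Rinv (y - (⟪rhat, y⟫ - d) • rhat) + (⟪rhat, y⟫ - d) • ghat)
      (fun x : EuclideanSpace ℝ (Fin n) =>
        R (x - (⟪ghat, x⟫ - c) • ghat) + (⟪ghat, x⟫ - c) • rhat) ∧
    Function.RightInverse
      (fun y : EuclideanSpace ℝ (Fin n) =>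
        Rinv (y - (⟪rhat, y⟫ - d) • rhat) + (⟪rhat, y⟫ - d) • ghat)
      (fun x : EuclideanSpace ℝ (Fin n) =>
        R (x - (⟪ghat, x⟫ - c) • ghat) + (⟪ghat, x⟫ - c) • rhat) := by
  simp only [sub_eq_zero] at hguard
  have hmaps : MapsTo R {x | ⟪ghat, x⟫ = c} {y | ⟪rhat, y⟫ = d} :=
    hguard ▸ mapsTo_image R _
  have hmaps_inv : MapsTo Rinv {y | ⟪rhat, y⟫ = d} {x | ⟪ghat, x⟫ = c} := by
    rw [← hguard, image_eq_preimage_of_inverse hleft hright]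
    exact mapsTo_preimage Rinv _
  exact ⟨contDiff_resetExtension hR ghat rhat c, contDiff_resetExtension hRinv rhat ghat d,
    leftInverse_resetExtension hg hr hleft hmaps,
    leftInverse_resetExtension hr hg hright hmaps_inv⟩
end

section
/- For the bimodal piecewise-smooth control system, the sliding vector field is well defined: if x ∈ Σ and u ∈ U are such that a := ∇g(x)·f₁(x,u) > 0 and b := ∇g(x)·f₂(x,u) < 0, then the set of elements of 𝓕[f](x,u) tangent to Σ is a singleton, namely {v ∈ 𝓕[f](x,u) : ∇g(x)·v = 0} = { (a f₂(x,u) − b f₁(x,u)) / (a − b) }. -/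
open Set MeasureTheory Function

noncomputable def filippovReg {n m : ℕ}
    (f : EuclideanSpace ℝ (Fin n) → EuclideanSpace ℝ (Fin m) → EuclideanSpace ℝ (Fin n))
    (D : Set (EuclideanSpace ℝ (Fin n)))
    (x : EuclideanSpace ℝ (Fin n)) (u : EuclideanSpace ℝ (Fin m)) :
    Set (EuclideanSpace ℝ (Fin n)) :=
  ⋂ δ > (0:ℝ), ⋂ (S : Set (EuclideanSpace ℝ (Fin n))) (_ : volume S = 0),
    closure (convexHull ℝ ((fun y => f y u) '' ((Metric.ball x δ \ S) ∩ D)))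

/-! Since `∇g(x) ≠ 0`, the point `x ∈ Σ` is neither a local minimum nor a local maximum of `g`,
so both open regions `D₁` and `D₂` accumulate at `x`; being open, they keep points in every small
ball around `x` after any null set is removed. By continuity of `f₁` and `f₂`, the Filippov set at
`x` is therefore exactly the segment `[f₁(x,u), f₂(x,u)]`, and the hyperplane `∇g(x)·v = 0` meets
it in a single point because the endpoints lie on opposite sides. -/

open Metric Filter Topology

lemma sep_segment_apply_eq_zero {𝕜 E F : Type*} [Field 𝕜] [LinearOrder 𝕜]
    [IsStrictOrderedRing 𝕜] [AddCommGroup E] [Module 𝕜 E] [FunLike F E 𝕜]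
    [LinearMapClass F 𝕜 E 𝕜] (φ : F) {p q : E} (hp : 0 < φ p) (hq : φ q < 0) :
    {v ∈ segment 𝕜 p q | φ v = 0} = {(φ p - φ q)⁻¹ • (φ p • q - φ q • p)} := by
  have hpq : φ p - φ q ≠ 0 := (sub_pos.2 (hq.trans hp)).ne'
  ext v
  simp only [mem_sep_iff, mem_singleton_iff]
  constructor
  · rintro ⟨⟨s, t, -, -, hst, rfl⟩, hv⟩
    simp only [map_add, map_smul, smul_eq_mul] at hv
    have hs : s = -φ q / (φ p - φ q) := by
      field_simp
      linear_combination hv - φ q * hst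
    have ht : t = φ p / (φ p - φ q) := by
      field_simp
      linear_combination φ p * hst - hv
    rw [hs, ht, smul_sub, smul_smul, smul_smul, div_eq_mul_inv, div_eq_mul_inv]
    module
  · rintro rfl
    refine ⟨⟨-φ q / (φ p - φ q), φ p / (φ p - φ q), div_nonneg (by linarith) (by linarith),
      div_nonneg hp.le (by linarith), by field_simp; ring, ?_⟩, ?_⟩
    · rw [smul_sub, smul_smul, smul_smul, div_eq_mul_inv, div_eq_mul_inv]
      module
    · simp only [map_smul, map_sub, smul_eq_mul]
      ring

lemma isCompact_segment {E : Type*} [AddCommGroup E] [Module ℝ E] [TopologicalSpace E]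
    [IsTopologicalAddGroup E] [ContinuousSMul ℝ E] (p q : E) : IsCompact (segment ℝ p q) := by
  rw [segment_eq_image]
  exact isCompact_Icc.image (by fun_prop)

section Regular

variable {E : Type*} [NormedAddCommGroup E] [NormedSpace ℝ E] {g : E → ℝ} {d : StrongDual ℝ E}
  {x : E}

lemma mem_closure_setOf_lt_of_hasFDerivAt (hg : HasFDerivAt g d x) (hd : d ≠ 0) :
    x ∈ closure {y | g y < g x} := by
  by_contra hx
  rw [mem_closure_iff_frequently, not_frequently] at hx
  exact hd (IsLocalMin.hasFDerivAt_eq_zero (hx.mono fun _ hy => not_lt.1 hy) hg)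

lemma mem_closure_setOf_gt_of_hasFDerivAt (hg : HasFDerivAt g d x) (hd : d ≠ 0) :
    x ∈ closure {y | g x < g y} := by
  by_contra hx
  rw [mem_closure_iff_frequently, not_frequently] at hx
  exact hd (IsLocalMax.hasFDerivAt_eq_zero (hx.mono fun _ hy => not_lt.1 hy) hg)

end Regular

section Filippov

variable {n m : ℕ}
  {f : EuclideanSpace ℝ (Fin n) → EuclideanSpace ℝ (Fin m) → EuclideanSpace ℝ (Fin n)}
  {D : Set (EuclideanSpace ℝ (Fin n))} {x : EuclideanSpace ℝ (Fin n)}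
  {u : EuclideanSpace ℝ (Fin m)}

lemma convex_filippovReg : Convex ℝ (filippovReg f D x u) :=
  convex_iInter fun _ => convex_iInter fun _ => convex_iInter fun _ => convex_iInter fun _ =>
    (convex_convexHull ℝ _).closure

lemma filippovReg_subset_of_eventually_mem_cthickening {K : Set (EuclideanSpace ℝ (Fin n))}
    (hK : Convex ℝ K) (hKc : IsClosed K)
    (hf : ∀ ε > 0, ∀ᶠ y in 𝓝[D] x, f y u ∈ cthickening ε K) :
    filippovReg f D x u ⊆ K := by
  intro v hv
  rw [← hKc.closure_eq, closure_eq_iInter_cthickening, mem_iInter₂]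
  intro ε hε
  obtain ⟨δ, hδ, hball⟩ := Metric.mem_nhdsWithin_iff.1 (hf ε hε)
  have himage : (f · u) '' ((ball x δ \ ∅) ∩ D) ⊆ cthickening ε K := by
    rintro _ ⟨y, ⟨⟨hy, -⟩, hyD⟩, rfl⟩
    exact hball ⟨hy, hyD⟩
  simp only [filippovReg, mem_iInter] at hv
  exact closure_minimal (convexHull_min himage (hK.cthickening ε)) isClosed_cthickening
    (hv δ hδ ∅ measure_empty)

lemma mem_filippovReg_of_eqOn {V : Set (EuclideanSpace ℝ (Fin n))}
    {h : EuclideanSpace ℝ (Fin n) → EuclideanSpace ℝ (Fin n)} (hV : IsOpen V) (hVD : V ⊆ D)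
    (hxV : x ∈ closure V) (hfh : EqOn (f · u) h V) (hh : ContinuousWithinAt h V x) :
    h x ∈ filippovReg f D x u := by
  simp only [filippovReg, mem_iInter]
  intro δ hδ S hS
  refine closure_mono (subset_convexHull ℝ _) (Metric.mem_closure_iff.2 fun ε hε => ?_)
  obtain ⟨δ₁, hδ₁, hclose⟩ := Metric.continuousWithinAt_iff.1 hh ε hε
  have hW : (ball x (min δ δ₁) ∩ V).Nonempty :=
    _root_.mem_closure_iff.1 hxV _ isOpen_ball (mem_ball_self (lt_min hδ hδ₁))
  obtain ⟨y, ⟨hyball, hyV⟩, hyS⟩ : ((ball x (min δ δ₁) ∩ V) \ S).Nonempty := by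
    refine nonempty_of_measure_ne_zero (μ := volume) ?_
    rw [measure_sdiff_null hS]
    exact ((isOpen_ball.inter hV).measure_pos volume hW).ne'
  refine ⟨f y u, ⟨y, ⟨⟨ball_subset_ball (min_le_left _ _) hyball, hyS⟩, hVD hyV⟩, rfl⟩, ?_⟩
  rw [dist_comm, show f y u = h y from hfh hyV]
  exact hclose hyV (lt_of_lt_of_le hyball (min_le_right _ _))

theorem filippovReg_ite_eq_segment {g : EuclideanSpace ℝ (Fin n) → ℝ} (hg : Continuous g)
    {f₁ f₂ : EuclideanSpace ℝ (Fin n) → EuclideanSpace ℝ (Fin m) → EuclideanSpace ℝ (Fin n)}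
    (hf₁ : ContinuousAt (f₁ · u) x) (hf₂ : ContinuousAt (f₂ · u) x)
    (hneg : x ∈ closure {y | g y < 0}) (hpos : x ∈ closure {y | 0 < g y}) :
    filippovReg (fun y w => if g y < 0 then f₁ y w else f₂ y w) {y | g y ≠ 0} x u
      = segment ℝ (f₁ x u) (f₂ x u) := by
  refine Subset.antisymm (filippovReg_subset_of_eventually_mem_cthickening (convex_segment _ _)
    (isCompact_segment _ _).isClosed fun ε hε => ?_) (convex_filippovReg.segment_subset ?_ ?_)
  · refine eventually_nhdsWithin_of_eventually_nhds ?_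
    filter_upwards [hf₁.eventually (closedBall_mem_nhds _ hε),
      hf₂.eventually (closedBall_mem_nhds _ hε)] with y hy₁ hy₂
    split_ifs
    · exact mem_cthickening_of_dist_le _ _ _ _ (left_mem_segment ℝ _ _) hy₁
    · exact mem_cthickening_of_dist_le _ _ _ _ (right_mem_segment ℝ _ _) hy₂
  · exact mem_filippovReg_of_eqOn (h := (f₁ · u)) (isOpen_lt hg continuous_const) (fun _ hy => hy.ne) hneg
      (fun _ hy => if_pos hy) hf₁.continuousWithinAt
  · exact mem_filippovReg_of_eqOn (h := (f₂ · u)) (isOpen_lt continuous_const hg) (fun _ hy => hy.ne') hpos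
      (fun _ hy => if_neg hy.not_gt) hf₂.continuousWithinAt

end Filippov

theorem sliding_vector_field_general {n m : ℕ}
    (g : EuclideanSpace ℝ (Fin n) → ℝ) (hg : ContDiff ℝ (⊤:ℕ∞) g)
    (f₁ f₂ : EuclideanSpace ℝ (Fin n) → EuclideanSpace ℝ (Fin m) → EuclideanSpace ℝ (Fin n))
    (hf₁ : ContDiff ℝ (⊤:ℕ∞) (uncurry f₁)) (hf₂ : ContDiff ℝ (⊤:ℕ∞) (uncurry f₂))
    (x : EuclideanSpace ℝ (Fin n)) (hx : g x = 0)
    (u : EuclideanSpace ℝ (Fin m))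
    (ha : 0 < fderiv ℝ g x (f₁ x u)) (hb : fderiv ℝ g x (f₂ x u) < 0) :
    {v ∈ filippovReg (fun y w => if g y < 0 then f₁ y w else f₂ y w) {y | g y ≠ 0} x u |
        fderiv ℝ g x v = 0}
      = {(fderiv ℝ g x (f₁ x u) - fderiv ℝ g x (f₂ x u))⁻¹ •
          (fderiv ℝ g x (f₁ x u) • f₂ x u - fderiv ℝ g x (f₂ x u) • f₁ x u)} := by
  have hd : HasFDerivAt g (fderiv ℝ g x) x :=
    (hg.differentiable (by simp)).differentiableAt.hasFDerivAt
  have hd₀ : fderiv ℝ g x ≠ 0 := fun h => by simp [h] at ha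
  have hcont {f : EuclideanSpace ℝ (Fin n) → EuclideanSpace ℝ (Fin m) → EuclideanSpace ℝ (Fin n)}
      (hf : ContDiff ℝ (⊤:ℕ∞) (uncurry f)) : ContinuousAt (f · u) x :=
    (hf.continuous.comp (Continuous.prodMk_left u)).continuousAt
  have hneg := mem_closure_setOf_lt_of_hasFDerivAt hd hd₀
  have hpos := mem_closure_setOf_gt_of_hasFDerivAt hd hd₀
  rw [hx] at hneg hpos
  rw [filippovReg_ite_eq_segment hg.continuous (hcont hf₁) (hcont hf₂) hneg hpos]
  exact sep_segment_apply_eq_zero (fderiv ℝ g x) ha hb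

/-- The sliding vector field is well defined: at a point of the switching surface where
`a = ∇g·f₁ > 0` and `b = ∇g·f₂ < 0`, the unique element of the Filippov regularization
tangent to `Σ` is `(a f₂ − b f₁)/(a − b)`. -/
theorem sliding_vector_field {n m : ℕ}
    (U : Set (EuclideanSpace ℝ (Fin m))) (hU : IsCompact U)
    (g : EuclideanSpace ℝ (Fin n) → ℝ) (hg : ContDiff ℝ (⊤:ℕ∞) g)
    (hreg : ∀ x, g x = 0 → fderiv ℝ g x ≠ 0)
    (f₁ f₂ : EuclideanSpace ℝ (Fin n) → EuclideanSpace ℝ (Fin m) → EuclideanSpace ℝ (Fin n))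
    (hf₁ : ContDiff ℝ (⊤:ℕ∞) (uncurry f₁)) (hf₂ : ContDiff ℝ (⊤:ℕ∞) (uncurry f₂))
    (L : ℝ)
    (hL₁ : ∀ u ∈ U, ∀ x y, ‖f₁ x u - f₁ y u‖ ≤ L * ‖x - y‖)
    (hL₂ : ∀ u ∈ U, ∀ x y, ‖f₂ x u - f₂ y u‖ ≤ L * ‖x - y‖)
    (x : EuclideanSpace ℝ (Fin n)) (hx : g x = 0)
    (u : EuclideanSpace ℝ (Fin m)) (hu : u ∈ U)
    (ha : 0 < fderiv ℝ g x (f₁ x u)) (hb : fderiv ℝ g x (f₂ x u) < 0) :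
    {v ∈ filippovReg (fun y w => if g y < 0 then f₁ y w else f₂ y w) {y | g y ≠ 0} x u |
        fderiv ℝ g x v = 0}
      = {(fderiv ℝ g x (f₁ x u) - fderiv ℝ g x (f₂ x u))⁻¹ •
          (fderiv ℝ g x (f₁ x u) • f₂ x u - fderiv ℝ g x (f₂ x u) • f₁ x u)} :=
  sliding_vector_field_general g hg f₁ f₂ hf₁ hf₂ x hx u ha hb
end

section
/- Under the hyperplane reset setup, let φ be a hybrid transition function, let f₁, f₂ : ℝⁿ × ℝᵐ → ℝⁿ be smooth (C^∞), and fix ε > 0. Define g_e^ε(x) = ĝᵀx − (c + ε), p^ε(x) = x − ĝ g_e^ε(x), and R̄^ε(x) = R(p^ε(x) − ĝ ε) + r̂ g_e^ε(x) (which is a C^∞ diffeomorphism of ℝⁿ, so DR̄^ε(x) is invertible for every x). Then the relaxed glued vector field f_e^ε(x,u) = (1 − φ(g_e(x)/ε)) f₁(x,u) + φ(g_e(x)/ε) · (DR̄^ε(x))⁻¹ · f₂(R̄^ε(x), u) is a smooth (C^∞) map from ℝⁿ × ℝᵐ to ℝⁿ. -/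
open Set Function
open scoped RealInnerProductSpace

/-- A hybrid transition function: smooth, `[0,1]`-valued, `0` below `0`, `1` above `1`,
and monotonically increasing on `(0,1)`. -/
def IsHybridTransitionFn (φ : ℝ → ℝ) : Prop :=
  ContDiff ℝ (⊤:ℕ∞) φ ∧ (∀ a, φ a ∈ Icc (0:ℝ) 1) ∧
  (∀ a, a ≤ (0:ℝ) → φ a = 0) ∧ (∀ a, (1:ℝ) ≤ a → φ a = 1) ∧
  MonotoneOn φ (Ioo (0:ℝ) 1)

/-! The map `R̄^ε` has the explicit smooth inverse `y ↦ R⁻¹(y − r_e(y) r̂) + (r_e(y) + ε) ĝ`: since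
`R` carries `G̃` onto `R̃`, the `r̂`-coordinate of `R̄^ε(x)` relative to `R̃` is `g_e^ε(x)`, which
lets one undo the two summands separately. Hence `DR̄^ε` is everywhere invertible, and as operator
inversion is smooth on the invertible maps, `x ↦ (DR̄^ε(x))⁻¹` is smooth; the glued field is then
assembled from smooth pieces. -/

attribute [local fun_prop] ContDiff.inner

section InverseDerivative

variable {𝕜 : Type*} [NontriviallyNormedField 𝕜]
  {E : Type*} [NormedAddCommGroup E] [NormedSpace 𝕜 E]
  {F : Type*} [NormedAddCommGroup F] [NormedSpace 𝕜 F]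
  {f : E → F} {g : F → E}

theorem isInvertible_fderiv_of_leftInverse (hgf : LeftInverse g f) (hfg : RightInverse g f)
    {x : E} (hf : DifferentiableAt 𝕜 f x) (hg : DifferentiableAt 𝕜 g (f x)) :
    (fderiv 𝕜 f x).IsInvertible := by
  refine .of_inverse (g := fderiv 𝕜 g (f x)) ?_ ?_
  · have hf' : DifferentiableAt 𝕜 f (g (f x)) := by rwa [hgf x]
    have h := fderiv_comp (f x) hf' hg
    rwa [hfg.comp_eq_id, fderiv_id, hgf x, eq_comm] at h
  · rw [← fderiv_comp x hg hf, hgf.comp_eq_id, fderiv_id]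

theorem contDiff_inverse_fderiv_of_leftInverse [CompleteSpace E] {m n : WithTop ℕ∞}
    (hf : ContDiff 𝕜 n f) (hmn : m + 1 ≤ n) (hg : Differentiable 𝕜 g)
    (hgf : LeftInverse g f) (hfg : RightInverse g f) :
    ContDiff 𝕜 m fun x => (fderiv 𝕜 f x).inverse := by
  have hf₁ : Differentiable 𝕜 f := hf.differentiable fun hn => by simp [hn] at hmn
  refine contDiff_iff_contDiffAt.2 fun x => ?_
  exact (isInvertible_fderiv_of_leftInverse hgf hfg (hf₁ x) (hg _)).contDiffAt_map_inverse.comp x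
    (hf.fderiv_right hmn).contDiffAt

end InverseDerivative

section RelaxedReset

variable {E : Type*} [NormedAddCommGroup E] [InnerProductSpace ℝ E]

/-- The relaxed reset map `R̄^ε`. -/
noncomputable def relaxedReset (ghat rhat : E) (c ε : ℝ) (R : E → E) (z : E) : E :=
  R ((z - (⟪ghat, z⟫ - (c + ε)) • ghat) - ε • ghat) + (⟪ghat, z⟫ - (c + ε)) • rhat

noncomputable def relaxedResetInv (ghat rhat : E) (d ε : ℝ) (Rinv : E → E) (y : E) : E :=
  Rinv (y - (⟪rhat, y⟫ - d) • rhat) + ((⟪rhat, y⟫ - d) + ε) • ghat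

variable {ghat rhat : E} {c d ε : ℝ} {R Rinv : E → E}

theorem contDiff_relaxedReset {n : WithTop ℕ∞} (hR : ContDiff ℝ n R) :
    ContDiff ℝ n (relaxedReset ghat rhat c ε R) := by
  unfold relaxedReset
  fun_prop

theorem contDiff_relaxedResetInv {n : WithTop ℕ∞} (hRinv : ContDiff ℝ n Rinv) :
    ContDiff ℝ n (relaxedResetInv ghat rhat d ε Rinv) := by
  unfold relaxedResetInv
  fun_prop

theorem leftInverse_relaxedResetInv (hg : ‖ghat‖ = 1) (hr : ‖rhat‖ = 1)
    (hleft : LeftInverse Rinv R)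
    (hmaps : MapsTo R {x | ⟪ghat, x⟫ - c = 0} {y | ⟪rhat, y⟫ - d = 0}) :
    LeftInverse (relaxedResetInv ghat rhat d ε Rinv) (relaxedReset ghat rhat c ε R) := by
  intro z
  set a := ⟪ghat, z⟫ - (c + ε)
  set p := (z - a • ghat) - ε • ghat
  have hp : ⟪ghat, p⟫ - c = 0 := by
    simp only [p, a, inner_sub_right, inner_smul_right, real_inner_self_eq_norm_sq, hg]
    ring
  have hRp : ⟪rhat, R p⟫ - d = 0 := hmaps hp
  have ha : ⟪rhat, relaxedReset ghat rhat c ε R z⟫ - d = a := by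
    simp only [relaxedReset, inner_add_right, inner_smul_right, real_inner_self_eq_norm_sq, hr]
    linear_combination hRp
  rw [relaxedResetInv, ha, relaxedReset, add_sub_cancel_right, hleft]
  module

theorem rightInverse_relaxedResetInv (hg : ‖ghat‖ = 1) (hr : ‖rhat‖ = 1)
    (hright : RightInverse Rinv R)
    (hmaps : MapsTo Rinv {y | ⟪rhat, y⟫ - d = 0} {x | ⟪ghat, x⟫ - c = 0}) :
    RightInverse (relaxedResetInv ghat rhat d ε Rinv) (relaxedReset ghat rhat c ε R) := by
  intro y
  set b := ⟪rhat, y⟫ - d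
  have hq : ⟪rhat, y - b • rhat⟫ - d = 0 := by
    simp only [b, inner_sub_right, inner_smul_right, real_inner_self_eq_norm_sq, hr]
    ring
  have hRinvq : ⟪ghat, Rinv (y - b • rhat)⟫ - c = 0 := hmaps hq
  have hb : ⟪ghat, relaxedResetInv ghat rhat d ε Rinv y⟫ - (c + ε) = b := by
    simp only [relaxedResetInv, inner_add_right, inner_smul_right, real_inner_self_eq_norm_sq, hg]
    linear_combination hRinvq
  have hproj : (relaxedResetInv ghat rhat d ε Rinv y - b • ghat) - ε • ghat
      = Rinv (y - b • rhat) := by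
    rw [relaxedResetInv]
    module
  rw [relaxedReset, hb, hproj, hright]
  module

end RelaxedReset

theorem contDiff_uncurry_transitionBlend {𝕜 : Type*} [NontriviallyNormedField 𝕜]
    {E U V : Type*} [NormedAddCommGroup E] [NormedSpace 𝕜 E] [NormedAddCommGroup U]
    [NormedSpace 𝕜 U] [NormedAddCommGroup V] [NormedSpace 𝕜 V] {n : WithTop ℕ∞}
    {φ : 𝕜 → 𝕜} {s : E → 𝕜} {F : E → E} {A : E → E →L[𝕜] V} {f₁ : E → U → V} {f₂ : E → U → E}
    (hφ : ContDiff 𝕜 n φ) (hs : ContDiff 𝕜 n s) (hF : ContDiff 𝕜 n F) (hA : ContDiff 𝕜 n A)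
    (hf₁ : ContDiff 𝕜 n (uncurry f₁)) (hf₂ : ContDiff 𝕜 n (uncurry f₂)) :
    ContDiff 𝕜 n (uncurry fun x u => (1 - φ (s x)) • f₁ x u + φ (s x) • A x (f₂ (F x) u)) := by
  have hφs : ContDiff 𝕜 n fun p : E × U => φ (s p.1) := hφ.comp (hs.comp contDiff_fst)
  have hf₂F : ContDiff 𝕜 n fun p : E × U => f₂ (F p.1) p.2 :=
    hf₂.comp ((hF.comp contDiff_fst).prodMk contDiff_snd)
  exact ((contDiff_const.sub hφs).smul hf₁).add
    (hφs.smul ((hA.comp contDiff_fst).clm_apply hf₂F))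

theorem relaxed_glued_field_smooth_general {n m : ℕ}
    (ghat rhat : EuclideanSpace ℝ (Fin n)) (hg : ‖ghat‖ = 1) (hr : ‖rhat‖ = 1) (c d : ℝ)
    (R Rinv : EuclideanSpace ℝ (Fin n) → EuclideanSpace ℝ (Fin n))
    (hR : ContDiff ℝ (⊤:ℕ∞) R) (hRinv : ContDiff ℝ (⊤:ℕ∞) Rinv)
    (hleft : Function.LeftInverse Rinv R) (hright : Function.RightInverse Rinv R)
    (hguard : R '' {x | ⟪ghat, x⟫ - c = 0} = {y | ⟪rhat, y⟫ - d = 0})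
    (φ : ℝ → ℝ) (hφ : IsHybridTransitionFn φ)
    (f₁ f₂ : EuclideanSpace ℝ (Fin n) → EuclideanSpace ℝ (Fin m) → EuclideanSpace ℝ (Fin n))
    (hf₁ : ContDiff ℝ (⊤:ℕ∞) (uncurry f₁)) (hf₂ : ContDiff ℝ (⊤:ℕ∞) (uncurry f₂))
    (ε : ℝ) :
    ContDiff ℝ (⊤:ℕ∞) (uncurry fun (x : EuclideanSpace ℝ (Fin n))
        (u : EuclideanSpace ℝ (Fin m)) =>
      (1 - φ ((⟪ghat, x⟫ - c) / ε)) • f₁ x u +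
      φ ((⟪ghat, x⟫ - c) / ε) •
        (fderiv ℝ (fun z : EuclideanSpace ℝ (Fin n) =>
            R ((z - (⟪ghat, z⟫ - (c + ε)) • ghat) - ε • ghat)
              + (⟪ghat, z⟫ - (c + ε)) • rhat) x).inverse
          (f₂ (R ((x - (⟪ghat, x⟫ - (c + ε)) • ghat) - ε • ghat)
              + (⟪ghat, x⟫ - (c + ε)) • rhat) u)) := by
  have hRmaps : MapsTo R {x | ⟪ghat, x⟫ - c = 0} {y | ⟪rhat, y⟫ - d = 0} :=
    hguard ▸ mapsTo_image R _
  have hRinvmaps : MapsTo Rinv {y | ⟪rhat, y⟫ - d = 0} {x | ⟪ghat, x⟫ - c = 0} := by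
    rw [← hguard, image_eq_preimage_of_inverse hleft hright]
    exact mapsTo_preimage Rinv _
  have hReset := contDiff_relaxedReset (ghat := ghat) (rhat := rhat) (c := c) (ε := ε) hR
  have hDinv : ContDiff ℝ (⊤:ℕ∞) fun x => (fderiv ℝ (relaxedReset ghat rhat c ε R) x).inverse :=
    contDiff_inverse_fderiv_of_leftInverse hReset (by exact_mod_cast le_top)
      ((contDiff_relaxedResetInv (d := d) hRinv).differentiable (by simp))
      (leftInverse_relaxedResetInv hg hr hleft hRmaps)
      (rightInverse_relaxedResetInv hg hr hright hRinvmaps)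
  have hs : ContDiff ℝ (⊤:ℕ∞) fun x : EuclideanSpace ℝ (Fin n) => (⟪ghat, x⟫ - c) / ε := by
    fun_prop
  exact contDiff_uncurry_transitionBlend hφ.1 hs hReset hDinv hf₁ hf₂

/-- Under the hyperplane reset setup, the relaxed glued vector field
`f_e^ε(x,u) = (1 − φ(g_e(x)/ε)) f₁(x,u) + φ(g_e(x)/ε) (DR̄^ε(x))⁻¹ f₂(R̄^ε(x),u)`
is a smooth map from `ℝⁿ × ℝᵐ` to `ℝⁿ`. -/
theorem relaxed_glued_field_smooth {n m : ℕ}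
    (ghat rhat : EuclideanSpace ℝ (Fin n)) (hg : ‖ghat‖ = 1) (hr : ‖rhat‖ = 1) (c d : ℝ)
    (R Rinv : EuclideanSpace ℝ (Fin n) → EuclideanSpace ℝ (Fin n))
    (hR : ContDiff ℝ (⊤:ℕ∞) R) (hRinv : ContDiff ℝ (⊤:ℕ∞) Rinv)
    (hleft : Function.LeftInverse Rinv R) (hright : Function.RightInverse Rinv R)
    (hguard : R '' {x | ⟪ghat, x⟫ - c = 0} = {y | ⟪rhat, y⟫ - d = 0})
    (φ : ℝ → ℝ) (hφ : IsHybridTransitionFn φ)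
    (f₁ f₂ : EuclideanSpace ℝ (Fin n) → EuclideanSpace ℝ (Fin m) → EuclideanSpace ℝ (Fin n))
    (hf₁ : ContDiff ℝ (⊤:ℕ∞) (uncurry f₁)) (hf₂ : ContDiff ℝ (⊤:ℕ∞) (uncurry f₂))
    (ε : ℝ) (hε : 0 < ε) :
    ContDiff ℝ (⊤:ℕ∞) (uncurry fun (x : EuclideanSpace ℝ (Fin n))
        (u : EuclideanSpace ℝ (Fin m)) =>
      (1 - φ ((⟪ghat, x⟫ - c) / ε)) • f₁ x u +
      φ ((⟪ghat, x⟫ - c) / ε) •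
        (fderiv ℝ (fun z : EuclideanSpace ℝ (Fin n) =>
            R ((z - (⟪ghat, z⟫ - (c + ε)) • ghat) - ε • ghat)
              + (⟪ghat, z⟫ - (c + ε)) • rhat) x).inverse
          (f₂ (R ((x - (⟪ghat, x⟫ - (c + ε)) • ghat) - ε • ghat)
              + (⟪ghat, x⟫ - (c + ε)) • rhat) u)) :=
  relaxed_glued_field_smooth_general ghat rhat hg hr c d R Rinv hR hRinv hleft hright hguard φ hφ f₁
    f₂ hf₁ hf₂ ε
end
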